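/- Let A be a 4×4 real matrix with Aᵀ η A = η (where η = diag(−1,1,1,1)) and A₀₀ ≥ 1, let v⃗ ∈ ℝ³ be a Euclidean unit vector, and let b ∈ ℝ. Then there exists a nonzero linear functional L on ℝ⁴ such that {x ∈ H³ | v⃗ · Φ₁(x, Ax) + b = 0} = {x ∈ H³ | L(x) = 0}, where Φ₁ denotes the first component of the Pogorelov map and · is the Euclidean dot product on ℝ³; explicitly one may take L(x) = 2 v⃗ · x⃗ + b(x₀ + (Ax)₀). In other words, the level set is the intersection of H³ with a 3-dimensional linear subspace of ℝ⁴, i.e. a geodesic plane of H³. -/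

import Mathlib

noncomputable section
open Matrix

/-- Minkowski inner product on ℝ⁴: ⟨x,y⟩ = −x₀y₀ + x₁y₁ + x₂y₂ + x₃y₃. -/
def mink (x y : Fin 4 → ℝ) : ℝ :=
  -(x 0 * y 0) + x 1 * y 1 + x 2 * y 2 + x 3 * y 3

/-- The hyperboloid model of hyperbolic 3-space. -/
def Hyp : Set (Fin 4 → ℝ) := {x | 0 < x 0 ∧ mink x x = -1}

/-- Spatial part x⃗ of x = (x₀, x⃗). -/
def spat (x : Fin 4 → ℝ) : Fin 3 → ℝ := fun i => x i.succ

/-- The Pogorelov map Φ(x,y) = (2x⃗/(x₀+y₀), 2y⃗/(x₀+y₀)). -/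
def pog (x y : Fin 4 → ℝ) : (Fin 3 → ℝ) × (Fin 3 → ℝ) :=
  ((2 / (x 0 + y 0)) • spat x, (2 / (x 0 + y 0)) • spat y)

/-- Euclidean dot product on ℝ³. -/
def dot3 (a b : Fin 3 → ℝ) : ℝ := a 0 * b 0 + a 1 * b 1 + a 2 * b 2

/-- Euclidean norm on ℝ³. -/
def enorm3 (a : Fin 3 → ℝ) : ℝ := Real.sqrt (a 0 ^ 2 + a 1 ^ 2 + a 2 ^ 2)

/-- The matrix η = diag(−1,1,1,1) of the Minkowski inner product. -/
def eta : Matrix (Fin 4) (Fin 4) ℝ := Matrix.diagonal ![(-1 : ℝ), 1, 1, 1]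

/-!
On `H³` the denominator `x₀ + (Ax)₀` of the Pogorelov map is positive: writing
`(Ax)₀ = -⟨x, A⁻¹e₀⟩` with `A⁻¹e₀ ∈ H³` (because `A⁻¹ = η Aᵀ η` is again an orthochronous
Lorentz matrix), this is the reverse Cauchy–Schwarz inequality `⟨x, y⟩ < 0` for `x, y ∈ H³`.
Multiplying `v⃗ · Φ₁(x, Ax) + b = 0` by that denominator therefore gives the equivalent linear
equation `L(x) = 0`.
-/

lemma Matrix.mul_mul_transpose_eq_of_transpose_mul_mul_eq {n R : Type*} [Fintype n]
    [DecidableEq n] [CommRing R] {J A : Matrix n n R} (hJ : J * J = 1)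
    (hA : Aᵀ * J * A = J) : A * J * Aᵀ = J := by
  have hinv : (J * Aᵀ * J) * A = 1 := by
    rw [Matrix.mul_assoc, Matrix.mul_assoc, ← Matrix.mul_assoc Aᵀ, hA, hJ]
  calc A * J * Aᵀ = A * (J * Aᵀ * J) * J := by simp only [Matrix.mul_assoc, hJ, Matrix.mul_one]
    _ = J := by rw [mul_eq_one_comm.mp hinv, Matrix.one_mul]

lemma eta_mul_eta : eta * eta = 1 := by
  rw [eta, Matrix.diagonal_mul_diagonal, ← Matrix.diagonal_one]
  congr 1
  ext i
  fin_cases i <;> norm_num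

/-- Reverse Cauchy–Schwarz: `x⃗ · y⃗ < x₀ y₀`, because `x₀² = 1 + |x⃗|²` and `y₀² = 1 + |y⃗|²`. -/
lemma mink_neg_of_mem_Hyp {x y : Fin 4 → ℝ} (hx : x ∈ Hyp) (hy : y ∈ Hyp) : mink x y < 0 := by
  obtain ⟨hx0, hxx⟩ := hx
  obtain ⟨hy0, hyy⟩ := hy
  simp only [mink] at hxx hyy ⊢
  set s := x 1 * y 1 + x 2 * y 2 + x 3 * y 3
  have hsq : s ^ 2 < (x 0 * y 0) ^ 2 := by
    nlinarith [sq_nonneg (x 1 * y 2 - x 2 * y 1), sq_nonneg (x 1 * y 3 - x 3 * y 1),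
      sq_nonneg (x 2 * y 3 - x 3 * y 2), sq_nonneg (x 1), sq_nonneg (x 2), sq_nonneg (x 3),
      sq_nonneg (y 1), sq_nonneg (y 2), sq_nonneg (y 3)]
  linarith [(abs_lt_of_sq_lt_sq' hsq (by positivity)).2]

/-- The vector `A⁻¹ e₀ = η Aᵀ η e₀` of a Lorentz matrix `A`, so that `(A x)₀ = -⟨x, A⁻¹ e₀⟩`. -/
def invImageTimeAxis (A : Matrix (Fin 4) (Fin 4) ℝ) : Fin 4 → ℝ :=
  ![A 0 0, -A 0 1, -A 0 2, -A 0 3]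

lemma mulVec_apply_zero_eq_neg_mink (A : Matrix (Fin 4) (Fin 4) ℝ) (x : Fin 4 → ℝ) :
    A.mulVec x 0 = -mink x (invImageTimeAxis A) := by
  simp only [mulVec, dotProduct, Fin.sum_univ_four, mink, invImageTimeAxis, cons_val]
  ring

lemma mink_invImageTimeAxis_self (A : Matrix (Fin 4) (Fin 4) ℝ) :
    mink (invImageTimeAxis A) (invImageTimeAxis A) = (A * eta * Aᵀ) 0 0 := by
  simp [mink, invImageTimeAxis, eta, mul_apply, Fin.sum_univ_four]

lemma invImageTimeAxis_mem_Hyp {A : Matrix (Fin 4) (Fin 4) ℝ} (hA : Aᵀ * eta * A = eta)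
    (hA00 : 0 < A 0 0) : invImageTimeAxis A ∈ Hyp := by
  refine ⟨hA00, ?_⟩
  rw [mink_invImageTimeAxis_self, mul_mul_transpose_eq_of_transpose_mul_mul_eq eta_mul_eta hA]
  simp [eta]

lemma mulVec_apply_zero_pos_of_mem_Hyp {A : Matrix (Fin 4) (Fin 4) ℝ} (hA : Aᵀ * eta * A = eta)
    (hA00 : 0 < A 0 0) {x : Fin 4 → ℝ} (hx : x ∈ Hyp) : 0 < A.mulVec x 0 := by
  rw [mulVec_apply_zero_eq_neg_mink, neg_pos]
  exact mink_neg_of_mem_Hyp hx (invImageTimeAxis_mem_Hyp hA hA00)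

lemma mul_dot3_pog_fst_add (v : Fin 3 → ℝ) (b : ℝ) {x y : Fin 4 → ℝ} (h : x 0 + y 0 ≠ 0) :
    (x 0 + y 0) * (dot3 v (pog x y).1 + b) = 2 * dot3 v (spat x) + b * (x 0 + y 0) := by
  simp only [pog, dot3, Pi.smul_apply, smul_eq_mul]
  field_simp

lemma dot3_self_of_enorm3_eq_one {v : Fin 3 → ℝ} (hv : enorm3 v = 1) : dot3 v v = 1 := by
  rw [enorm3, Real.sqrt_eq_one] at hv
  simp only [dot3]
  linarith

def planeFunctional (A : Matrix (Fin 4) (Fin 4) ℝ) (v : Fin 3 → ℝ) (b : ℝ) :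
    (Fin 4 → ℝ) →ₗ[ℝ] ℝ where
  toFun x := 2 * dot3 v (spat x) + b * (x 0 + A.mulVec x 0)
  map_add' x y := by
    simp only [dot3, spat, Pi.add_apply, Matrix.mulVec_add]
    ring
  map_smul' c x := by
    simp only [dot3, spat, Pi.smul_apply, Matrix.mulVec_smul, smul_eq_mul, RingHom.id_apply]
    ring

lemma planeFunctional_ne_zero (A : Matrix (Fin 4) (Fin 4) ℝ) (hA00 : 0 < A 0 0)
    {v : Fin 3 → ℝ} (hv : enorm3 v = 1) (b : ℝ) : planeFunctional A v b ≠ 0 := by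
  intro hL
  by_cases hb : b = 0
  · have h : planeFunctional A v b (Fin.cons 0 v) = 2 := by
      change 2 * dot3 v v + b * _ = 2
      rw [dot3_self_of_enorm3_eq_one hv, hb]
      ring
    simp [hL] at h
  · have h : planeFunctional A v b (Pi.single 0 1) = b * (1 + A 0 0) := by
      simp [planeFunctional, dot3, spat, mulVec_single]
    rw [hL, LinearMap.zero_apply] at h
    exact mul_ne_zero hb (by positivity) h.symm

/-- The level set {x ∈ H³ | v⃗·Φ₁(x,Ax) + b = 0} is the intersection of H³ with
the kernel of a nonzero linear functional, explicitly
L(x) = 2 v⃗·x⃗ + b(x₀ + (Ax)₀); i.e. it is a geodesic plane of H³. -/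
theorem level_set_is_geodesic_plane (A : Matrix (Fin 4) (Fin 4) ℝ)
    (hA : Aᵀ * eta * A = eta) (hA00 : 1 ≤ A 0 0)
    (v : Fin 3 → ℝ) (hv : enorm3 v = 1) (b : ℝ) :
    ∃ L : (Fin 4 → ℝ) →ₗ[ℝ] ℝ, L ≠ 0 ∧
      (∀ x : Fin 4 → ℝ, L x = 2 * dot3 v (spat x) + b * (x 0 + A.mulVec x 0)) ∧
      {x ∈ Hyp | dot3 v (pog x (A.mulVec x)).1 + b = 0} = {x ∈ Hyp | L x = 0} := by
  have hA00' : 0 < A 0 0 := one_pos.trans_le hA00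
  refine ⟨planeFunctional A v b, planeFunctional_ne_zero A hA00' hv b, fun x => rfl, ?_⟩
  ext x
  simp only [Set.mem_ofPred_eq, and_congr_right_iff]
  intro hx
  have hd : 0 < x 0 + A.mulVec x 0 := add_pos hx.1 (mulVec_apply_zero_pos_of_mem_Hyp hA hA00' hx)
  rw [← mul_eq_zero_iff_left hd.ne', mul_dot3_pog_fst_add v b hd.ne']
  rfl
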